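/- Let (M,α_M) be a Hom-representation of a Hom-Leibniz algebra (L,α_L). The set of derivations d : (L,α_L) → (M,α_M) is in bijection with the set of Hom-Leibniz algebra homomorphisms h : (L,α_L) → (M⋊L, α̃) satisfying π∘h = Id_L. -/

import Mathlib

open LinearMap

/-- A (multiplicative) Hom-Leibniz algebra structure. -/
def IsHomLeibniz {K L : Type*} [Field K] [AddCommGroup L] [Module K L]
    (br : L →ₗ[K] L →ₗ[K] L) (a : L →ₗ[K] L) : Prop :=
  (∀ x y z, br (a x) (br y z) = br (br x y) (a z) - br (br x z) (a y)) ∧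
  ∀ x y, a (br x y) = br (a x) (a y)

/-- A homomorphism of Hom-Leibniz algebras. -/
def IsHomLeibnizHom {K L₁ L₂ : Type*} [Field K] [AddCommGroup L₁] [Module K L₁]
    [AddCommGroup L₂] [Module K L₂]
    (br₁ : L₁ →ₗ[K] L₁ →ₗ[K] L₁) (a₁ : L₁ →ₗ[K] L₁)
    (br₂ : L₂ →ₗ[K] L₂ →ₗ[K] L₂) (a₂ : L₂ →ₗ[K] L₂) (f : L₁ →ₗ[K] L₂) : Prop :=
  (∀ x y, f (br₁ x y) = br₂ (f x) (f y)) ∧ f ∘ₗ a₁ = a₂ ∘ₗ f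

/-- A (right) Hom-action of `(L, brL, aL)` on `(M, brM, aM)`, with left action
`lam : L → M → M` and right action `rho : M → L → M`. -/
structure IsHomAction {K L M : Type*} [Field K] [AddCommGroup L] [Module K L]
    [AddCommGroup M] [Module K M]
    (brL : L →ₗ[K] L →ₗ[K] L) (aL : L →ₗ[K] L)
    (brM : M →ₗ[K] M →ₗ[K] M) (aM : M →ₗ[K] M)
    (lam : L →ₗ[K] M →ₗ[K] M) (rho : M →ₗ[K] L →ₗ[K] M) : Prop where
  act_a : ∀ m x y, rho (aM m) (brL x y) = rho (rho m x) (aL y) - rho (rho m y) (aL x)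
  act_b : ∀ x m y, lam (aL x) (rho m y) = rho (lam x m) (aL y) - lam (brL x y) (aM m)
  act_c : ∀ x y m, lam (aL x) (lam y m) = lam (brL x y) (aM m) - rho (lam x m) (aL y)
  act_d : ∀ x m m', lam (aL x) (brM m m') = brM (lam x m) (aM m') - brM (lam x m') (aM m)
  act_e : ∀ m m' x, brM (aM m) (rho m' x) = rho (brM m m') (aL x) - brM (rho m x) (aM m')
  act_f : ∀ m x m', brM (aM m) (lam x m') = brM (rho m x) (aM m') - rho (brM m m') (aL x)
  act_g : ∀ x m, aM (lam x m) = lam (aL x) (aM m)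
  act_h : ∀ m x, aM (rho m x) = rho (aM m) (aL x)

/-- The semi-direct product bracket on `M × L`:
`[(m₁,l₁),(m₂,l₂)] = ([m₁,m₂] + α_L(l₁)·m₂ + m₁·α_L(l₂), [l₁,l₂])`. -/
def sdBracket {K L M : Type*} [Field K] [AddCommGroup L] [Module K L]
    [AddCommGroup M] [Module K M]
    (brM : M →ₗ[K] M →ₗ[K] M) (brL : L →ₗ[K] L →ₗ[K] L) (aL : L →ₗ[K] L)
    (lam : L →ₗ[K] M →ₗ[K] M) (rho : M →ₗ[K] L →ₗ[K] M) :
    (M × L) →ₗ[K] (M × L) →ₗ[K] (M × L) :=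
  LinearMap.mk₂ K
    (fun p q => (brM p.1 q.1 + lam (aL p.2) q.1 + rho p.1 (aL q.2), brL p.2 q.2))
    (by intro p p' q; simp [Prod.ext_iff]; abel)
    (by intro c p q; simp [Prod.ext_iff, smul_add])
    (by intro p q q'; simp [Prod.ext_iff]; abel)
    (by intro c p q; simp [Prod.ext_iff, smul_add])

section SemidirectProduct

variable {K L M : Type*} [Field K] [AddCommGroup L] [Module K L] [AddCommGroup M] [Module K M]
  (brM : M →ₗ[K] M →ₗ[K] M) (brL : L →ₗ[K] L →ₗ[K] L) (aL : L →ₗ[K] L) (aM : M →ₗ[K] M)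
  (lam : L →ₗ[K] M →ₗ[K] M) (rho : M →ₗ[K] L →ₗ[K] M)

@[simp]
theorem sdBracket_apply (p q : M × L) :
    sdBracket brM brL aL lam rho p q =
      (brM p.1 q.1 + lam (aL p.2) q.1 + rho p.1 (aL q.2), brL p.2 q.2) :=
  rfl

theorem isHomLeibnizHom_prod_id_iff (d : L →ₗ[K] M) :
    IsHomLeibnizHom brL aL (sdBracket brM brL aL lam rho) (aM.prodMap aL) (d.prod LinearMap.id) ↔
      (∀ l₁ l₂, d (brL l₁ l₂) = brM (d l₁) (d l₂) + lam (aL l₁) (d l₂) + rho (d l₁) (aL l₂)) ∧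
        d ∘ₗ aL = aM ∘ₗ d := by
  refine and_congr (forall₂_congr fun l₁ l₂ => ?_) ?_
  · simp [Prod.ext_iff]
  · simp [LinearMap.ext_iff, Prod.ext_iff]

theorem eq_prod_id_of_snd_comp_eq_id {h : L →ₗ[K] M × L}
    (hsnd : LinearMap.snd K M L ∘ₗ h = LinearMap.id) :
    h = (LinearMap.fst K M L ∘ₗ h).prod LinearMap.id := by
  rw [← hsnd, ← LinearMap.prod_comp, LinearMap.pair_fst_snd, LinearMap.id_comp]

theorem prod_id_injective :
    Function.Injective fun d : L →ₗ[K] M => d.prod (LinearMap.id (R := K)) :=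
  fun _ _ h => by
    simpa only [LinearMap.fst_prod] using congrArg (LinearMap.fst K M L ∘ₗ ·) h

end SemidirectProduct

theorem statement9_general {K L M : Type*} [Field K] [AddCommGroup L] [Module K L]
    [AddCommGroup M] [Module K M]
    (brL : L →ₗ[K] L →ₗ[K] L) (aL : L →ₗ[K] L) (aM : M →ₗ[K] M)
    (lam : L →ₗ[K] M →ₗ[K] M) (rho : M →ₗ[K] L →ₗ[K] M) :
    Set.BijOn (fun d : L →ₗ[K] M => d.prod LinearMap.id)
      {d | (∀ l₁ l₂, d (brL l₁ l₂) = lam (aL l₁) (d l₂) + rho (d l₁) (aL l₂)) ∧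
        d ∘ₗ aL = aM ∘ₗ d}
      {h | IsHomLeibnizHom brL aL (sdBracket 0 brL aL lam rho) (aM.prodMap aL) h ∧
        LinearMap.snd K M L ∘ₗ h = LinearMap.id} := by
  have hder (d : L →ₗ[K] M) :
      IsHomLeibnizHom brL aL (sdBracket 0 brL aL lam rho) (aM.prodMap aL) (d.prod LinearMap.id) ↔
        (∀ l₁ l₂, d (brL l₁ l₂) = lam (aL l₁) (d l₂) + rho (d l₁) (aL l₂)) ∧
          d ∘ₗ aL = aM ∘ₗ d := by
    simpa only [LinearMap.zero_apply, zero_add] using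
      isHomLeibnizHom_prod_id_iff 0 brL aL aM lam rho d
  refine ⟨fun d hd => ⟨(hder d).2 hd, LinearMap.snd_prod _ _⟩, prod_id_injective.injOn, ?_⟩
  rintro h ⟨hhom, hsnd⟩
  rw [eq_prod_id_of_snd_comp_eq_id hsnd] at hhom ⊢
  exact ⟨_, (hder _).1 hhom, rfl⟩

/-- for a Hom-representation `(M,α_M)` of `(L,α_L)`, the assignment
`d ↦ (l ↦ (d l, l))` is a bijection from the set of derivations `(L,α_L) → (M,α_M)`
onto the set of Hom-Leibniz homomorphisms `h : L → M⋊L` with `π∘h = Id_L`. -/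
theorem statement9 {K L M : Type*} [Field K] [AddCommGroup L] [Module K L]
    [AddCommGroup M] [Module K M]
    (brL : L →ₗ[K] L →ₗ[K] L) (aL : L →ₗ[K] L) (aM : M →ₗ[K] M)
    (lam : L →ₗ[K] M →ₗ[K] M) (rho : M →ₗ[K] L →ₗ[K] M)
    (hL : IsHomLeibniz brL aL)
    (hrep : IsHomAction brL aL (0 : M →ₗ[K] M →ₗ[K] M) aM lam rho) :
    Set.BijOn (fun d : L →ₗ[K] M => d.prod LinearMap.id)
      {d | (∀ l₁ l₂, d (brL l₁ l₂) = lam (aL l₁) (d l₂) + rho (d l₁) (aL l₂)) ∧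
        d ∘ₗ aL = aM ∘ₗ d}
      {h | IsHomLeibnizHom brL aL (sdBracket 0 brL aL lam rho) (aM.prodMap aL) h ∧
        LinearMap.snd K M L ∘ₗ h = LinearMap.id} :=
  statement9_general brL aL aM lam rho
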